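/- For every complex n×n matrix A, the spectrum of the Sylvester operator X ↦ AX + XAᵀ, viewed as a linear endomorphism of the space of all complex n×n matrices, equals the set of all sums λ + μ where λ and μ range over the spectrum of A. -/

import Mathlib

open Matrix

/-- The Sylvester operator `X ↦ AX + XAᵀ` as a linear endomorphism of the space
of complex `n × n` matrices. -/
noncomputable def sylvesterEnd {n : ℕ} (A : Matrix (Fin n) (Fin n) ℂ) :
    Module.End ℂ (Matrix (Fin n) (Fin n) ℂ) where
  toFun X := A * X + X * Aᵀ
  map_add' X Y := by
    simp only [mul_add, add_mul]
    abel
  map_smul' c X := by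
    simp only [RingHom.id_apply, mul_smul_comm, smul_mul_assoc, smul_add]

/-!
If `X ≠ 0` is an eigenvector of `X ↦ AX + XAᵀ` for `z`, then `AX = XB` with `B = z - Aᵀ`, and
Sylvester's argument applies: `χ_A(A) = 0` gives `X χ_A(B) = 0`, so `χ_A(B)` is singular, and by
spectral mapping `χ_A` vanishes at some eigenvalue `z - m` of `B`, with `m` an eigenvalue of
`Aᵀ`, hence of `A`. Conversely, if `Av = lv` and `Aw = mw`, then `v wᵀ` is an eigenvector for
`l + m`.
-/

open Polynomial

namespace Matrix

variable {ι κ R K : Type*} [Fintype ι] [Fintype κ] [DecidableEq ι] [DecidableEq κ]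

theorem spectrum_transpose [CommRing R] (A : Matrix ι ι R) :
    spectrum R Aᵀ = spectrum R A := by
  ext r
  rw [spectrum.mem_iff, spectrum.mem_iff, ← isUnit_transpose, transpose_sub,
    transpose_transpose, algebraMap_eq_diagonal, diagonal_transpose]

theorem aeval_mul_eq_mul_aeval [CommRing R] {A : Matrix ι ι R} {B : Matrix κ κ R}
    {X : Matrix ι κ R} (h : A * X = X * B) (p : R[X]) :
    aeval A p * X = X * aeval B p := by
  induction p using Polynomial.induction_on with
  | C a => simp only [aeval_C, Algebra.algebraMap_eq_smul_one, Matrix.smul_mul, Matrix.mul_smul,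
      Matrix.one_mul, Matrix.mul_one]
  | add p q hp hq => simp only [map_add, Matrix.add_mul, Matrix.mul_add, hp, hq]
  | monomial k a ih =>
    simp only [pow_succ, ← mul_assoc, map_mul (aeval _) _ Polynomial.X, aeval_X]
    rw [Matrix.mul_assoc, h, ← Matrix.mul_assoc, ih, Matrix.mul_assoc]

theorem exists_mem_spectrum_of_mul_eq_mul [Field K] [IsAlgClosed K] {A : Matrix ι ι K}
    {B : Matrix κ κ K} {X : Matrix ι κ K} (hX : X ≠ 0) (h : A * X = X * B) :
    ∃ μ ∈ spectrum K A, μ ∈ spectrum K B := by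
  obtain ⟨-, j, -⟩ : ∃ i j, X i j ≠ 0 := by simpa [← Matrix.ext_iff] using hX
  -- so that `Matrix κ κ K` is nontrivial and `spectrum K B` is nonempty
  have : Nonempty κ := ⟨j⟩
  have hsingular : ¬IsUnit (aeval B A.charpoly) := by
    rw [isUnit_iff_isUnit_det]
    intro hunit
    refine hX ?_
    rw [← mul_nonsing_inv_cancel_right _ X hunit, ← aeval_mul_eq_mul_aeval h,
      aeval_self_charpoly, Matrix.zero_mul, Matrix.zero_mul]
  have hzero := (spectrum.zero_mem_iff K).mpr hsingular
  rw [spectrum.map_polynomial_aeval_of_nonempty _ _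
    (spectrum.nonempty_of_isAlgClosed_of_finiteDimensional K B)] at hzero
  obtain ⟨μ, hμB, hμA⟩ := hzero
  exact ⟨μ, mem_spectrum_iff_isRoot_charpoly.mpr hμA, hμB⟩

theorem exists_mulVec_eq_smul_of_mem_spectrum [Field K] {A : Matrix ι ι K} {μ : K}
    (h : μ ∈ spectrum K A) : ∃ v ≠ 0, A *ᵥ v = μ • v := by
  rw [← spectrum_toLin', ← Module.End.hasEigenvalue_iff_mem_spectrum] at h
  obtain ⟨v, hv⟩ := h.exists_hasEigenvector
  exact ⟨v, hv.2, hv.apply_eq_smul⟩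

end Matrix

theorem sylvesterEnd_vecMulVec {n : ℕ} (A : Matrix (Fin n) (Fin n) ℂ) (v w : Fin n → ℂ) :
    sylvesterEnd A (vecMulVec v w) = vecMulVec (A *ᵥ v) w + vecMulVec v (A *ᵥ w) := by
  rw [← vecMul_transpose A w, ← vecMulVec_mul, ← mul_vecMulVec]
  rfl

/-- The spectrum of the Sylvester operator `X ↦ AX + XAᵀ` on complex `n × n`
matrices equals the set of all sums `λ + μ` of elements of the spectrum of `A`. -/
theorem spectrum_sylvesterEnd (n : ℕ) (A : Matrix (Fin n) (Fin n) ℂ) :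
    spectrum ℂ (sylvesterEnd A) =
      {z : ℂ | ∃ l ∈ spectrum ℂ A, ∃ m ∈ spectrum ℂ A, z = l + m} := by
  ext z
  constructor
  · intro hz
    obtain ⟨X, hX⟩ := (Module.End.hasEigenvalue_iff_mem_spectrum.mpr hz).exists_hasEigenvector
    have hAX : A * X = X * (algebraMap ℂ _ z - Aᵀ) := by
      rw [mul_sub, ← Algebra.commutes, Algebra.algebraMap_eq_smul_one, smul_mul_assoc, one_mul,
        ← hX.apply_eq_smul, eq_sub_iff_add_eq]
      rfl
    obtain ⟨l, hlA, hl⟩ := exists_mem_spectrum_of_mul_eq_mul hX.2 hAX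
    rw [← spectrum.singleton_sub_eq, spectrum_transpose, Set.singleton_sub] at hl
    obtain ⟨m, hm, rfl⟩ := hl
    exact ⟨z - m, hlA, m, hm, by ring⟩
  · rintro ⟨l, hl, m, hm, rfl⟩
    obtain ⟨v, hv0, hv⟩ := exists_mulVec_eq_smul_of_mem_spectrum hl
    obtain ⟨w, hw0, hw⟩ := exists_mulVec_eq_smul_of_mem_spectrum hm
    refine (Module.End.hasEigenvalue_of_hasEigenvector
      (x := vecMulVec v w) ⟨?_, vecMulVec_ne_zero hv0 hw0⟩).mem_spectrum
    rw [Module.End.mem_eigenspace_iff, sylvesterEnd_vecMulVec, hv, hw, smul_vecMulVec,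
      vecMulVec_smul, add_smul]
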